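/- Let G and H be finitely presented groups with G ⊑ H and H ⊑ G, and suppose G is Hopfian, i.e., every surjective group homomorphism G → G is injective. Then G and H are isomorphic. -/

import Mathlib

/-- `G` preforms `H` (written `G ⊑ H` in the paper). -/
def Preforms (G : Type*) (H : Type*) [Group G] [Group H] : Prop :=
  ∃ (k : ℕ) (t : Fin k → H), Subgroup.closure (Set.range t) = ⊤ ∧
    ∀ R : ℕ, ∃ s : Fin k → G, Subgroup.closure (Set.range s) = ⊤ ∧
      ∀ w : FreeGroup (Fin k), (FreeGroup.toWord w).length ≤ R →
        (FreeGroup.lift s w = 1 ↔ FreeGroup.lift t w = 1)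

/-- A group is finitely presented if it is the quotient of a finitely generated free
group by the normal closure of a finite set of relators. -/
def IsFinitelyPresented (K : Type*) [Group K] : Prop :=
  ∃ (n : ℕ) (Rel : Finset (FreeGroup (Fin n))),
    Nonempty (K ≃* FreeGroup (Fin n) ⧸ Subgroup.normalClosure (Rel : Set (FreeGroup (Fin n))))

/-!
If `H` is finitely presented, its relators on the generating tuple `t` witnessing `G ⊑ H` are
consequences of finitely many of them, all of length at most some `R`. The tuple `s` that `G ⊑ H`
provides for this `R` satisfies these relators, so `t ↦ s` extends to a surjection `H ↠ G`.
Symmetrically there is a surjection `G ↠ H`; the composite `G ↠ H ↠ G` is injective because `G`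
is Hopfian, hence so is `G ↠ H`.
-/

open Function

theorem IsFinitelyPresented.group_isFinitelyPresented {K : Type*} [Group K]
    (hK : IsFinitelyPresented K) : Group.IsFinitelyPresented K := by
  obtain ⟨n, Rel, ⟨e⟩⟩ := hK
  exact Group.IsFinitelyPresented.equiv (G := PresentedGroup (Rel : Set (FreeGroup (Fin n))))
    e.symm

-- A Tietze transformation from the generators of `K` to those of `FreeGroup ι`.
theorem ker_eq_normalClosure_of_comp_eq {ι K H : Type*} [Group K] [Group H]
    {α : K →* H} {β : FreeGroup ι →* H}
    {u : K →* FreeGroup ι} {v : FreeGroup ι →* K} (hu : β.comp u = α) (hv : α.comp v = β)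
    {S : Set K} (hS : α.ker = Subgroup.normalClosure S) :
    β.ker = Subgroup.normalClosure
      (u '' S ∪ Set.range fun i => (FreeGroup.of i)⁻¹ * u (v (FreeGroup.of i))) := by
  set N := Subgroup.normalClosure
    (u '' S ∪ Set.range fun i => (FreeGroup.of i)⁻¹ * u (v (FreeGroup.of i)))
  apply le_antisymm
  · intro w hw
    have huv : (QuotientGroup.mk' N).comp (u.comp v) = QuotientGroup.mk' N := by
      refine FreeGroup.ext_hom _ _ fun i => ?_
      rw [MonoidHom.comp_apply, QuotientGroup.mk'_apply, QuotientGroup.mk'_apply, eq_comm,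
        QuotientGroup.eq]
      exact Subgroup.subset_normalClosure (Or.inr ⟨i, rfl⟩)
    have hvw : v w ∈ Subgroup.normalClosure S := by
      rw [← hS, MonoidHom.mem_ker, ← MonoidHom.comp_apply, hv]
      exact hw
    have huvw : u (v w) ∈ N :=
      (Subgroup.map_normalClosure_le S u).trans (Subgroup.normalClosure_mono Set.subset_union_left)
        (Subgroup.mem_map_of_mem u hvw)
    rw [← QuotientGroup.eq_one_iff, ← QuotientGroup.mk'_apply, ← huv, MonoidHom.comp_apply,
      QuotientGroup.mk'_apply, QuotientGroup.eq_one_iff]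
    exact huvw
  · refine Subgroup.normalClosure_le_normal ?_
    rintro _ (⟨r, hr, rfl⟩ | ⟨i, rfl⟩)
    · rw [SetLike.mem_coe, MonoidHom.mem_ker, ← MonoidHom.comp_apply, hu, ← MonoidHom.mem_ker,
        hS]
      exact Subgroup.subset_normalClosure hr
    · rw [SetLike.mem_coe, MonoidHom.mem_ker, map_mul, map_inv, ← MonoidHom.comp_apply β u, hu,
        ← MonoidHom.comp_apply α v, hv, inv_mul_cancel]

theorem Group.IsFinitelyPresented.isFinitelyNormallyGenerated_ker {ι H : Type*} [Finite ι]
    [Group H] [Group.IsFinitelyPresented H] {β : FreeGroup ι →* H} (hβ : Surjective β) :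
    β.ker.IsFinitelyNormallyGenerated := by
  obtain ⟨n, α, hα, S, hS_fin, hS⟩ := ‹Group.IsFinitelyPresented H›
  choose x hx using fun i : Fin n => hβ (α (FreeGroup.of i))
  choose y hy using fun i : ι => hα (β (FreeGroup.of i))
  have hu : β.comp (FreeGroup.lift x) = α := FreeGroup.ext_hom _ _ fun i => by simp [hx]
  have hv : α.comp (FreeGroup.lift y) = β := FreeGroup.ext_hom _ _ fun i => by simp [hy]
  exact ⟨_, (hS_fin.image _).union (Set.finite_range _),
    (ker_eq_normalClosure_of_comp_eq hu hv hS.symm).symm⟩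

theorem Preforms.exists_surjective {G H : Type*} [Group G] [Group H]
    [Group.IsFinitelyPresented H] (hGH : Preforms G H) : ∃ φ : H →* G, Surjective φ := by
  obtain ⟨k, t, ht, hs⟩ := hGH
  have hβ : Surjective (FreeGroup.lift t) :=
    FreeGroup.lift_surjective_iff_closure_range_eq_top.mpr ht
  obtain ⟨T, hT_fin, hT⟩ := Group.IsFinitelyPresented.isFinitelyNormallyGenerated_ker hβ
  obtain ⟨R, hR⟩ := (hT_fin.image fun w => w.toWord.length).bddAbove
  obtain ⟨s, hs_gen, hst⟩ := hs R
  have hker : (FreeGroup.lift t).ker ≤ (FreeGroup.lift s).ker := by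
    rw [← hT]
    refine Subgroup.normalClosure_le_normal fun w hw => (hst w (hR ⟨w, hw, rfl⟩)).mpr ?_
    rw [← MonoidHom.mem_ker, ← hT]
    exact Subgroup.subset_normalClosure hw
  refine ⟨(FreeGroup.lift t).liftOfSurjective hβ ⟨_, hker⟩,
    Surjective.of_comp (g := FreeGroup.lift t) ?_⟩
  rw [← MonoidHom.coe_comp, MonoidHom.liftOfRightInverse_comp]
  exact FreeGroup.lift_surjective_iff_closure_range_eq_top.mpr hs_gen

/-- If `G` and `H` are finitely presented groups with `G ⊑ H ⊑ G` and `G` is Hopfian,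
then `G` and `H` are isomorphic. -/
theorem isomorphic_of_preforms_of_hopfian
    (G H : Type*) [Group G] [Group H]
    (hG : IsFinitelyPresented G) (hH : IsFinitelyPresented H)
    (hGH : Preforms G H) (hHG : Preforms H G)
    (hHopf : ∀ f : G →* G, Function.Surjective f → Function.Injective f) :
    Nonempty (G ≃* H) := by
  have := hG.group_isFinitelyPresented
  have := hH.group_isFinitelyPresented
  obtain ⟨φ, hφ⟩ := hGH.exists_surjective
  obtain ⟨ψ, hψ⟩ := hHG.exists_surjective
  have hψ_inj : Injective ψ := Injective.of_comp (f := φ) (hHopf (φ.comp ψ) (hφ.comp hψ))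
  exact ⟨MulEquiv.ofBijective ψ ⟨hψ_inj, hψ⟩⟩
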